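/- arXiv:1907.02809 — 2 statements merged into one kernel-verified Lean document; each statement's English description precedes it below -/
import Mathlib

section
/- Let (X,𝒳) be a measurable space and P a Markov kernel on X. For any two probability measures ξ and ξ' on (X,𝒳), any n ≥ 1, any c = (c_0,…,c_{n-1}) ∈ ℝ₊ⁿ and any h ∈ BD(Xⁿ, c): |E_ξ[h(X_0,…,X_{n-1})] − E_{ξ'}[h(X_0,…,X_{n-1})]| ≤ 2 Σ_{i=0}^{n-1} c_i · d_TV(ξ Pⁱ, ξ' Pⁱ). -/
open MeasureTheory ProbabilityTheory ENNReal Set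
open scoped Classical

noncomputable section

namespace QMD

variable {𝓧 : Type*} [MeasurableSpace 𝓧]

/-- `BD 𝓧 n c` : the set of measurable functions `f : 𝓧ⁿ → ℝ` with bounded differences `c`,
i.e. `|f x - f y| ≤ ∑ i, c i · 1{x i ≠ y i}`. -/
def BD (𝓧 : Type*) [MeasurableSpace 𝓧] (n : ℕ) (c : Fin n → ℝ) :
    Set ((Fin n → 𝓧) → ℝ) :=
  {f | Measurable f ∧
    ∀ x y : Fin n → 𝓧, |f x - f y| ≤ ∑ i, if x i = y i then 0 else c i}

/-- Prepend a point to a path. -/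
def cons0 (x : 𝓧) (ω : ℕ → 𝓧) : ℕ → 𝓧 := fun n => Nat.casesOn n x ω

/-- `IsMarkovFamily P μm` : for every initial probability distribution `ξ`,
`μm ξ` is the law `P_ξ` on the canonical space `ℕ → 𝓧` of the Markov chain with
kernel `P` and initial distribution `ξ`; this is characterized by the fact that
`μm ξ` is a probability measure and by the one-step disintegration
`P_ξ = ∫ (law of (x, X_0, X_1, …) with (X_k) ∼ P_{P(x,·)}) ξ(dx)`. -/
def IsMarkovFamily (P : Kernel 𝓧 𝓧) (μm : Measure 𝓧 → Measure (ℕ → 𝓧)) : Prop :=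
  (∀ ξ : Measure 𝓧, IsProbabilityMeasure ξ → IsProbabilityMeasure (μm ξ)) ∧
  ∀ ξ : Measure 𝓧, IsProbabilityMeasure ξ →
    μm ξ = ξ.bind fun x => (μm (P x)).map (cons0 x)

/-- Total variation distance between two measures. -/
noncomputable def dTV (ξ ξ' : Measure 𝓧) : ℝ :=
  ⨆ A : {A : Set 𝓧 // MeasurableSet A}, |(ξ A.1).toReal - (ξ' A.1).toReal|

/-- The natural filtration `𝓕_i = σ(X_0, …, X_i)` on the canonical space. -/
def Fil (𝓧 : Type*) [MeasurableSpace 𝓧] (i : ℕ) : MeasurableSpace (ℕ → 𝓧) :=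
  MeasurableSpace.comap (fun ω (k : Fin (i + 1)) => ω (k : ℕ)) inferInstance

/-- The σ-algebra `𝓕_τ` associated with a (stopping) time `τ`. -/
def stoppedSA (τ : (ℕ → 𝓧) → ℕ∞) : MeasurableSpace (ℕ → 𝓧) :=
  MeasurableSpace.generateFrom
    {A | ∀ m : ℕ, MeasurableSet[Fil 𝓧 m] (A ∩ {ω | τ ω ≤ (m : ℕ∞)})}

/-- `hitTime C i ω = τ_C^i(ω) = inf {m ≥ i : ω m ∈ C}` (`⊤` if `C` is never hit after `i`). -/
noncomputable def hitTime (C : Set 𝓧) (i : ℕ) (ω : ℕ → 𝓧) : ℕ∞ :=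
  ⨅ (m : ℕ) (_ : i ≤ m ∧ ω m ∈ C), (m : ℕ∞)

/-- The return time `σ_C = inf {m ≥ 1 : ω m ∈ C}`. -/
noncomputable def retTime (C : Set 𝓧) : (ℕ → 𝓧) → ℕ∞ := hitTime C 1

/-- The shift operator `θ` on the canonical space. -/
def shift (ω : ℕ → 𝓧) : ℕ → 𝓧 := fun k => ω (k + 1)

/-- `geomPow b m = b ^ m ∈ [0,∞]` for an extended natural exponent `m` (for a base `b > 1`). -/
noncomputable def geomPow (b : ℝ) (m : ℕ∞) : ℝ≥0∞ :=
  if m = ⊤ then ⊤ else ENNReal.ofReal (b ^ m.toNat)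

/-- Iterates of a kernel. -/
noncomputable def kpow (P : Kernel 𝓧 𝓧) : ℕ → Kernel 𝓧 𝓧
  | 0 => Kernel.id
  | m + 1 => P.comp (kpow P m)

/-- `P` is irreducible and aperiodic: there is a nonzero measure `ψ` such that any
`ψ`-positive set is reached with positive probability at all large enough times,
from every starting point. -/
def IrreducibleAperiodic (P : Kernel 𝓧 𝓧) : Prop :=
  ∃ ψ : Measure 𝓧, ψ ≠ 0 ∧ ∀ (x : 𝓧) (A : Set 𝓧), MeasurableSet A → ψ A ≠ 0 →
    ∃ N : ℕ, ∀ m ≥ N, kpow P m x A ≠ 0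

/-- `pad n i x* v` : the vector in `𝓧ⁿ` whose first `i` coordinates are `x*`,
followed by `v 0, v 1, …`. -/
def pad (n i : ℕ) (xstar : 𝓧) (v : ℕ → 𝓧) : Fin n → 𝓧 :=
  fun k => if (k : ℕ) < i then xstar else v ((k : ℕ) - i)

/-- `padAt n i x* ω` : the vector `(x*, …, x*, ω i, ω (i+1), …, ω (n-1))` (with `i`
copies of `x*`). -/
def padAt (n i : ℕ) (xstar : 𝓧) (ω : ℕ → 𝓧) : Fin n → 𝓧 :=
  fun k => if (k : ℕ) < i then xstar else ω (k : ℕ)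

/-- `g_i(x_0,…,x_i) = E_{x_i}[f(x_0,…,x_i, X_1,…,X_{n-1-i})]`. -/
noncomputable def gfun (μm : Measure 𝓧 → Measure (ℕ → 𝓧)) {n : ℕ}
    (f : (Fin n → 𝓧) → ℝ) (i : Fin n) (v : Fin n → 𝓧) : ℝ :=
  ∫ ω, f (fun k => if (k : ℕ) ≤ (i : ℕ) then v k else ω ((k : ℕ) - (i : ℕ)))
    ∂(μm (Measure.dirac (v i)))

/-- `g_{i,π}(x_0,…,x_i) = E_π[f(x_0,…,x_i, X_1,…,X_{n-1-i})]`. -/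
noncomputable def gfunPi (μm : Measure 𝓧 → Measure (ℕ → 𝓧)) (π : Measure 𝓧) {n : ℕ}
    (f : (Fin n → 𝓧) → ℝ) (i : Fin n) (v : Fin n → 𝓧) : ℝ :=
  ∫ ω, f (fun k => if (k : ℕ) ≤ (i : ℕ) then v k else ω ((k : ℕ) - (i : ℕ))) ∂(μm π)

/-- `G_i = E_x[ f(X_0,…,X_{n-1}) | 𝓕_{τ_C^i} ]`. -/
noncomputable def Gfun (μm : Measure 𝓧 → Measure (ℕ → 𝓧)) (C : Set 𝓧) {n : ℕ}
    (f : (Fin n → 𝓧) → ℝ) (x : 𝓧) (i : ℕ) : (ℕ → 𝓧) → ℝ :=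
  (μm (Measure.dirac x))[(fun ω => f (fun k => ω (k : ℕ))) | stoppedSA (hitTime C i)]

section AuxTV

variable {α β γ : Type*} [MeasurableSpace α] [MeasurableSpace β] [MeasurableSpace γ]

lemma dTV_bddAbove (μ ν : Measure α) [IsProbabilityMeasure μ] [IsProbabilityMeasure ν] :
    BddAbove (Set.range fun A : {A : Set α // MeasurableSet A} =>
      |(μ A.1).toReal - (ν A.1).toReal|) := by
  refine ⟨2, ?_⟩
  rintro x ⟨A, rfl⟩
  have h1 : (μ A.1).toReal ≤ 1 := by
    have := prob_le_one (μ := μ) (s := A.1)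
    simpa using ENNReal.toReal_mono one_ne_top this
  have h2 : (ν A.1).toReal ≤ 1 := by
    have := prob_le_one (μ := ν) (s := A.1)
    simpa using ENNReal.toReal_mono one_ne_top this
  have h3 : 0 ≤ (μ A.1).toReal := ENNReal.toReal_nonneg
  have h4 : 0 ≤ (ν A.1).toReal := ENNReal.toReal_nonneg
  rw [abs_sub_le_iff]
  constructor <;> linarith

lemma le_dTV {μ ν : Measure α} [IsProbabilityMeasure μ] [IsProbabilityMeasure ν]
    {A : Set α} (hA : MeasurableSet A) :
    |(μ A).toReal - (ν A).toReal| ≤ dTV μ ν :=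
  le_ciSup (dTV_bddAbove μ ν) (⟨A, hA⟩ : {A : Set α // MeasurableSet A})

lemma integrable_of_abs_le {ρ : Measure α} [IsFiniteMeasure ρ] {f : α → ℝ}
    (hf : Measurable f) {C : ℝ} (hC : ∀ x, |f x| ≤ C) : Integrable f ρ :=
  Integrable.mono' (integrable_const C) hf.aestronglyMeasurable
    (Filter.Eventually.of_forall fun x => by simpa [Real.norm_eq_abs] using hC x)

lemma abs_integral_sub_le_dTV {μ ν : Measure α} [IsProbabilityMeasure μ] [IsProbabilityMeasure ν]
    {f : α → ℝ} (hf : Measurable f) {C : ℝ} (hC : ∀ x, |f x| ≤ C) :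
    |∫ x, f x ∂μ - ∫ x, f x ∂ν| ≤ 2 * C * dTV μ ν := by
  have hα : Nonempty α := by
    by_contra hne
    have h1 : μ Set.univ = 1 := measure_univ
    rw [Set.univ_eq_empty_iff.mpr (not_nonempty_iff.mp hne)] at h1
    simp at h1
  have hC0 : 0 ≤ C := le_trans (abs_nonneg _) (hC (Classical.arbitrary α))
  set s : SignedMeasure α := μ.toSignedMeasure - ν.toSignedMeasure with hs_def
  obtain ⟨i, hi₁, hi₂, hi₃, hp, hq⟩ := s.toJordanDecomposition_spec
  set p := s.toJordanDecomposition.posPart with hp_def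
  set q := s.toJordanDecomposition.negPart with hq_def
  have hsA : ∀ A : Set α, MeasurableSet A →
      (μ A).toReal - (ν A).toReal = (p A).toReal - (q A).toReal := by
    intro A hA
    have h1 : s.toJordanDecomposition.toSignedMeasure A = s A := by
      rw [SignedMeasure.toSignedMeasure_toJordanDecomposition]
    rw [JordanDecomposition.toSignedMeasure] at h1
    rw [Measure.toSignedMeasure_sub_apply hA] at h1
    rw [hs_def, Measure.toSignedMeasure_sub_apply hA] at h1
    simp only [measureReal_def] at h1
    linarith
  have hmeq : μ + q = ν + p := by
    ext A hA
    have h2 := hsA A hA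
    have e1 : ((μ + q) A).toReal = ((ν + p) A).toReal := by
      rw [Measure.add_apply, Measure.add_apply,
        ENNReal.toReal_add (measure_ne_top μ A) (measure_ne_top q A),
        ENNReal.toReal_add (measure_ne_top ν A) (measure_ne_top p A)]
      linarith
    exact (ENNReal.toReal_eq_toReal_iff' (measure_ne_top _ _) (measure_ne_top _ _)).mp e1
  have hintμ : Integrable f μ := integrable_of_abs_le hf hC
  have hintν : Integrable f ν := integrable_of_abs_le hf hC
  have hintp : Integrable f p := integrable_of_abs_le hf hC
  have hintq : Integrable f q := integrable_of_abs_le hf hC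
  have hieq : ∫ x, f x ∂μ + ∫ x, f x ∂q = ∫ x, f x ∂ν + ∫ x, f x ∂p := by
    rw [← integral_add_measure hintμ hintq, ← integral_add_measure hintν hintp, hmeq]
  have hpu : (p Set.univ).toReal ≤ dTV μ ν := by
    rw [hp, SignedMeasure.toMeasureOfZeroLE_apply s hi₂ hi₁ MeasurableSet.univ]
    simp only [ENNReal.coe_toReal, NNReal.coe_mk, Set.inter_univ]
    have h4 : s i = (μ i).toReal - (ν i).toReal := by
      rw [hs_def]; exact Measure.toSignedMeasure_sub_apply hi₁
    rw [h4]
    exact le_trans (le_abs_self _) (le_dTV hi₁)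
  have hqu : (q Set.univ).toReal ≤ dTV μ ν := by
    rw [hq, SignedMeasure.toMeasureOfLEZero_apply s hi₃ hi₁.compl MeasurableSet.univ]
    simp only [ENNReal.coe_toReal, NNReal.coe_mk, Set.inter_univ]
    have h4 : s iᶜ = (μ iᶜ).toReal - (ν iᶜ).toReal := by
      rw [hs_def]; exact Measure.toSignedMeasure_sub_apply hi₁.compl
    rw [h4, neg_sub]
    refine le_trans (le_abs_self _) ?_
    rw [abs_sub_comm]
    exact le_dTV hi₁.compl
  have h5 : ∫ x, f x ∂μ - ∫ x, f x ∂ν = ∫ x, f x ∂p - ∫ x, f x ∂q := by linarith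
  have h6 : |∫ x, f x ∂p| ≤ C * (p Set.univ).toReal := by
    have := norm_integral_le_of_norm_le_const (μ := p) (f := f)
      (Filter.Eventually.of_forall fun x => by simpa [Real.norm_eq_abs] using hC x)
    simpa [Real.norm_eq_abs, measureReal_def] using this
  have h7 : |∫ x, f x ∂q| ≤ C * (q Set.univ).toReal := by
    have := norm_integral_le_of_norm_le_const (μ := q) (f := f)
      (Filter.Eventually.of_forall fun x => by simpa [Real.norm_eq_abs] using hC x)
    simpa [Real.norm_eq_abs, measureReal_def] using this
  calc |∫ x, f x ∂μ - ∫ x, f x ∂ν| = |∫ x, f x ∂p + -(∫ x, f x ∂q)| := by rw [h5]; ring_nf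
    _ ≤ |∫ x, f x ∂p| + |-(∫ x, f x ∂q)| := abs_add_le _ _
    _ = |∫ x, f x ∂p| + |∫ x, f x ∂q| := by rw [abs_neg]
    _ ≤ C * (p Set.univ).toReal + C * (q Set.univ).toReal := add_le_add h6 h7
    _ ≤ C * dTV μ ν + C * dTV μ ν :=
        add_le_add (mul_le_mul_of_nonneg_left hpu hC0) (mul_le_mul_of_nonneg_left hqu hC0)
    _ = 2 * C * dTV μ ν := by ring

lemma bind_congr_ae {m : Measure α} {f g : α → Measure β} (h : f =ᵐ[m] g) :
    m.bind f = m.bind g := by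
  unfold Measure.bind
  rw [Measure.map_congr h]

lemma map_bind {m : Measure α} {f : α → Measure β} (hf : Measurable f)
    {φ : β → γ} (hφ : Measurable φ) :
    (m.bind f).map φ = m.bind (fun x => (f x).map φ) := by
  rw [← Measure.bind_dirac_eq_map (m.bind f) hφ,
    Measure.bind_bind (g := fun x => Measure.dirac (φ x)) hf.aemeasurable (Measure.measurable_dirac.comp hφ).aemeasurable]
  congr 1
  funext a
  exact Measure.bind_dirac_eq_map (f a) hφ

lemma integral_bind_markov (μ : Measure α) [IsProbabilityMeasure μ]
    (η : Kernel α β) [IsMarkovKernel η]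
    {f : β → ℝ} (hf : Measurable f) {C : ℝ} (hC : ∀ y, |f y| ≤ C) :
    ∫ y, f y ∂(μ.bind ⇑η) = ∫ x, ∫ y, f y ∂(η x) ∂μ := by
  have hbe : μ.bind ⇑η = (μ ⊗ₘ η).map Prod.snd := by
    ext s hs
    rw [Measure.bind_apply hs η.measurable.aemeasurable, Measure.map_apply measurable_snd hs,
      Measure.compProd_apply (measurable_snd hs)]
    rfl
  rw [hbe, integral_map measurable_snd.aemeasurable hf.aestronglyMeasurable]
  have := Measure.integral_compProd (μ := μ) (κ := η) (f := fun z => f z.2)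
    (integrable_of_abs_le (hf.comp measurable_snd) (fun z => hC z.2))
  simpa using this

end AuxTV

section QMDAux

variable {𝓧 : Type*} [MeasurableSpace 𝓧]

lemma measurable_cons0 (x : 𝓧) : Measurable (cons0 x) := by
  apply measurable_pi_lambda
  intro k
  cases k with
  | zero => exact measurable_const
  | succ k => exact measurable_pi_apply k

lemma measurable_shift : Measurable (shift (𝓧 := 𝓧)) :=
  measurable_pi_lambda _ fun k => measurable_pi_apply _

lemma measurable_shifti (i : ℕ) :
    Measurable (fun ω : ℕ → 𝓧 => (fun k => ω (k + i))) :=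
  measurable_pi_lambda _ fun k => measurable_pi_apply _

lemma kappa_prob (P : Kernel 𝓧 𝓧) [IsMarkovKernel P]
    (μm : Measure 𝓧 → Measure (ℕ → 𝓧)) (hμm : IsMarkovFamily P μm) (x : 𝓧) :
    IsProbabilityMeasure ((μm (P x)).map (cons0 x)) := by
  haveI := hμm.1 (P x) inferInstance
  exact Measure.isProbabilityMeasure_map (measurable_cons0 x).aemeasurable

lemma kappa_aemeasurable (P : Kernel 𝓧 𝓧) [IsMarkovKernel P]
    (μm : Measure 𝓧 → Measure (ℕ → 𝓧)) (hμm : IsMarkovFamily P μm)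
    (μ : Measure 𝓧) [IsProbabilityMeasure μ] :
    AEMeasurable (fun x => (μm (P x)).map (cons0 x)) μ := by
  by_contra hae
  have h1 := hμm.2 μ inferInstance
  rw [Measure.bind, Measure.map_of_not_aemeasurable hae, Measure.join_zero] at h1
  haveI := hμm.1 μ inferInstance
  have h2 : (μm μ) Set.univ = 1 := measure_univ
  rw [h1] at h2
  simp at h2

lemma marg0 (P : Kernel 𝓧 𝓧) [IsMarkovKernel P]
    (μm : Measure 𝓧 → Measure (ℕ → 𝓧)) (hμm : IsMarkovFamily P μm)
    (μ : Measure 𝓧) [IsProbabilityMeasure μ] :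
    (μm μ).map (fun ω => ω 0) = μ := by
  have hae := kappa_aemeasurable P μm hμm μ
  have hgm : Measurable (hae.mk _) := hae.measurable_mk
  have hgeq : (fun x => (μm (P x)).map (cons0 x)) =ᵐ[μ] hae.mk _ := hae.ae_eq_mk
  have h1 : μm μ = μ.bind (hae.mk _) := by
    rw [hμm.2 μ inferInstance]
    exact bind_congr_ae hgeq
  rw [h1, map_bind hgm (measurable_pi_apply 0)]
  have h2 : ∀ᵐ x ∂μ, (hae.mk _ x).map (fun ω : ℕ → 𝓧 => ω 0) = Measure.dirac x := by
    filter_upwards [hgeq] with x hx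
    rw [← hx]
    rw [Measure.map_map (measurable_pi_apply 0) (measurable_cons0 x)]
    have h3 : ((fun ω : ℕ → 𝓧 => ω 0) ∘ cons0 x) = fun _ => x := rfl
    rw [h3]
    haveI := hμm.1 (P x) inferInstance
    rw [Measure.map_const, measure_univ, one_smul]
  rw [bind_congr_ae h2]
  exact Measure.bind_dirac

lemma map_shift_succ (ρ : Measure (ℕ → 𝓧)) (i : ℕ) :
    ρ.map (fun ω k => ω (k + (i + 1))) = (ρ.map (fun ω k => ω (k + i))).map shift := by
  rw [Measure.map_map measurable_shift (measurable_shifti i)]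
  congr 1
  funext ω
  funext k
  show ω (k + (i + 1)) = ω ((k + 1) + i)
  congr 1
  omega

lemma markov_claim (P : Kernel 𝓧 𝓧) [IsMarkovKernel P]
    (μm : Measure 𝓧 → Measure (ℕ → 𝓧)) (hμm : IsMarkovFamily P μm)
    (η : Kernel 𝓧 (ℕ → 𝓧))
    (N : Set 𝓧) (hNmeas : MeasurableSet N)
    (hNsub : ∀ x, x ∉ N → (μm (P x)).map (cons0 x) = η x)
    (n : ℕ) (ζ : Measure 𝓧) [IsProbabilityMeasure ζ]
    (hnull : ∀ i, i ≤ n → ((μm ζ).map (fun ω => ω i)) N = 0) :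
    ∀ i, i ≤ n →
      (μm ζ).map (fun ω k => ω (k + i)) = ((μm ζ).map (fun ω => ω i)).bind ⇑η := by
  haveI := hμm.1 ζ inferInstance
  have hκην : ∀ i, i ≤ n →
      (fun x => (μm (P x)).map (cons0 x)) =ᵐ[(μm ζ).map (fun ω => ω i)] ⇑η := by
    intro i hi
    refine ae_iff.mpr (measure_mono_null ?_ (hnull i hi))
    intro x hx
    by_contra hxN
    exact hx (hNsub x hxN)
  intro i
  induction i with
  | zero =>
    intro _
    have h0 : (fun ω : ℕ → 𝓧 => fun k => ω (k + 0)) = id := rfl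
    have h1 := hκην 0 (by omega)
    rw [marg0 P μm hμm ζ] at h1
    rw [h0, Measure.map_id, marg0 P μm hμm ζ, hμm.2 ζ inferInstance]
    exact bind_congr_ae h1
  | succ i ih =>
    intro hi1
    have hi : i ≤ n := by omega
    have hQi := ih hi
    have hcomp1 : ((fun ω : ℕ → 𝓧 => ω 1) ∘ (fun ω k => ω (k + i)))
        = fun ω : ℕ → 𝓧 => ω (i + 1) := by
      funext ω
      show ω (1 + i) = ω (i + 1)
      congr 1
      omega
    have hν1 : (μm ζ).map (fun ω => ω (i + 1))
        = ((μm ζ).map (fun ω => ω i)).bind (fun x => (η x).map (fun ω => ω 1)) := by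
      rw [← hcomp1, ← Measure.map_map (measurable_pi_apply 1) (measurable_shifti i), hQi,
        map_bind η.measurable (measurable_pi_apply 1)]
    have hmap1 : ∀ᵐ x ∂((μm ζ).map (fun ω => ω i)),
        (η x).map (fun ω : ℕ → 𝓧 => ω 1) = P x := by
      filter_upwards [hκην i hi] with x hx
      rw [← hx]
      rw [Measure.map_map (measurable_pi_apply 1) (measurable_cons0 x)]
      have e1 : ((fun ω : ℕ → 𝓧 => ω 1) ∘ cons0 x) = fun ω : ℕ → 𝓧 => ω 0 := rfl
      rw [e1]
      haveI := hμm.1 (P x) inferInstance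
      exact marg0 P μm hμm (P x)
    have hPN : ∀ᵐ x ∂((μm ζ).map (fun ω => ω i)), P x N = 0 := by
      have hmeasf : Measurable fun x => (η x).map (fun ω : ℕ → 𝓧 => ω 1) :=
        (Measure.measurable_map _ (measurable_pi_apply 1)).comp η.measurable
      have h2 : (((μm ζ).map (fun ω => ω i)).bind
          (fun x => (η x).map (fun ω : ℕ → 𝓧 => ω 1))) N = 0 := by
        rw [← hν1]
        exact hnull (i + 1) hi1
      rw [Measure.bind_apply hNmeas hmeasf.aemeasurable] at h2
      have h3 := (lintegral_eq_zero_iff ((Measure.measurable_coe hNmeas).comp hmeasf)).mp h2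
      filter_upwards [h3, hmap1] with x h4 h5
      rw [← h5]
      simpa using h4
    have hbindstep : ∀ᵐ x ∂((μm ζ).map (fun ω => ω i)),
        (η x).map shift = (P x).bind ⇑η := by
      filter_upwards [hκην i hi, hPN] with x hx hPx
      rw [← hx]
      rw [Measure.map_map measurable_shift (measurable_cons0 x)]
      have e2 : (shift (𝓧 := 𝓧) ∘ cons0 x) = id := rfl
      rw [e2, Measure.map_id, hμm.2 (P x) inferInstance]
      refine bind_congr_ae (ae_iff.mpr (measure_mono_null ?_ hPx))
      intro y hy
      by_contra hyN
      exact hy (hNsub y hyN)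
    have hν1P : (μm ζ).map (fun ω => ω (i + 1))
        = ((μm ζ).map (fun ω => ω i)).bind ⇑P := by
      rw [hν1]
      exact bind_congr_ae hmap1
    rw [map_shift_succ, hQi, map_bind η.measurable measurable_shift,
      bind_congr_ae hbindstep,
      ← Measure.bind_bind P.measurable.aemeasurable η.measurable.aemeasurable, ← hν1P]

end QMDAux


/-- **Lemma 1** : coupling bound on the difference of expectations of a bounded
difference functional of the chain under two initial distributions. -/
theorem bd_expectation_diff_le_dTV
    {𝓧 : Type*} [MeasurableSpace 𝓧] (P : Kernel 𝓧 𝓧) [IsMarkovKernel P]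
    (μm : Measure 𝓧 → Measure (ℕ → 𝓧)) (hμm : IsMarkovFamily P μm)
    (ξ ξ' : Measure 𝓧) [IsProbabilityMeasure ξ] [IsProbabilityMeasure ξ']
    (n : ℕ) (hn : 1 ≤ n) (c : Fin n → ℝ) (hc : ∀ i, 0 ≤ c i)
    (h : (Fin n → 𝓧) → ℝ) (hh : h ∈ BD 𝓧 n c) :
    |(∫ ω, h (fun k => ω (k : ℕ)) ∂(μm ξ)) - ∫ ω, h (fun k => ω (k : ℕ)) ∂(μm ξ')|
      ≤ 2 * ∑ i : Fin n,
          c i * dTV ((μm ξ).map (fun ω => ω (i : ℕ))) ((μm ξ').map (fun ω => ω (i : ℕ))) := by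
  classical
  haveI hPμξ : IsProbabilityMeasure (μm ξ) := hμm.1 ξ inferInstance
  haveI hPμξ' : IsProbabilityMeasure (μm ξ') := hμm.1 ξ' inferInstance
  have hXne : Nonempty 𝓧 := by
    by_contra hne
    have h1 : ξ Set.univ = 1 := measure_univ
    rw [Set.univ_eq_empty_iff.mpr (not_nonempty_iff.mp hne)] at h1
    simp at h1
  obtain ⟨xstar⟩ := hXne
  set κ₀ : 𝓧 → Measure (ℕ → 𝓧) := fun x => (μm (P x)).map (cons0 x) with hκ₀def
  have hκ₀prob : ∀ x, IsProbabilityMeasure (κ₀ x) := fun x => kappa_prob P μm hμm x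
  set ν : ℕ → Measure 𝓧 := fun i => (μm ξ).map (fun ω => ω i) with hνdef
  set ν' : ℕ → Measure 𝓧 := fun i => (μm ξ').map (fun ω => ω i) with hν'def
  have hνprob : ∀ i, IsProbabilityMeasure (ν i) := fun i =>
    Measure.isProbabilityMeasure_map (measurable_pi_apply i).aemeasurable
  have hν'prob : ∀ i, IsProbabilityMeasure (ν' i) := fun i =>
    Measure.isProbabilityMeasure_map (measurable_pi_apply i).aemeasurable
  set m : Measure 𝓧 := ∑ i ∈ Finset.range (n + 1), (ν i + ν' i) with hmdef
  have hκae : AEMeasurable κ₀ m := by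
    rw [hmdef]
    have hall : ∀ k : ℕ, AEMeasurable κ₀ (∑ i ∈ Finset.range k, (ν i + ν' i)) := by
      intro k
      induction k with
      | zero => simpa using aemeasurable_zero_measure
      | succ k ih =>
        rw [Finset.sum_range_succ]
        refine aemeasurable_add_measure_iff.mpr ⟨ih, ?_⟩
        haveI := hνprob k
        haveI := hν'prob k
        exact aemeasurable_add_measure_iff.mpr
          ⟨kappa_aemeasurable P μm hμm (ν k), kappa_aemeasurable P μm hμm (ν' k)⟩
    exact hall (n + 1)
  set g : 𝓧 → Measure (ℕ → 𝓧) := hκae.mk κ₀ with hgdef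
  have hgm : Measurable g := hκae.measurable_mk
  have hκg : κ₀ =ᵐ[m] g := hκae.ae_eq_mk
  have hSmeas : MeasurableSet {x : 𝓧 | g x Set.univ = 1} :=
    ((Measure.measurable_coe MeasurableSet.univ).comp hgm) (measurableSet_singleton 1)
  set η : Kernel 𝓧 (ℕ → 𝓧) :=
    ⟨fun x => if g x Set.univ = 1 then g x else Measure.dirac (fun _ => xstar),
      Measurable.ite hSmeas hgm measurable_const⟩ with hηdef
  have hηapp : ∀ x, η x = if g x Set.univ = 1 then g x else Measure.dirac (fun _ => xstar) :=
    fun _ => rfl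
  haveI hηmarkov : IsMarkovKernel η := by
    constructor
    intro x
    rw [hηapp x]
    split_ifs with hx
    · exact ⟨hx⟩
    · infer_instance
  have hηagree : κ₀ =ᵐ[m] ⇑η := by
    filter_upwards [hκg] with x hx
    have h1 : g x Set.univ = 1 := by
      rw [← hx]
      haveI := hκ₀prob x
      exact measure_univ
    rw [hηapp x, if_pos h1, hx]
  set N : Set 𝓧 := toMeasurable m {x | κ₀ x ≠ ⇑η x} with hNdef
  have hNmeas : MeasurableSet N := measurableSet_toMeasurable m _
  have hNnull : m N = 0 := by
    rw [hNdef, measure_toMeasurable]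
    exact ae_iff.mp hηagree
  have hNsub : ∀ x, x ∉ N → (μm (P x)).map (cons0 x) = η x := by
    intro x hx
    by_contra hne
    exact hx (subset_toMeasurable m _ hne)
  have hNull_all : ∀ i, i ≤ n → (ν i) N = 0 ∧ (ν' i) N = 0 := by
    intro i hi
    have h1 : m N = 0 := hNnull
    rw [hmdef, Measure.finset_sum_apply] at h1
    have h2 := (Finset.sum_eq_zero_iff.mp h1) i (Finset.mem_range.mpr (by omega))
    rw [Measure.add_apply] at h2
    exact ⟨(add_eq_zero.mp h2).1, (add_eq_zero.mp h2).2⟩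
  have hNullν : ∀ i, i ≤ n → (ν i) N = 0 := fun i hi => (hNull_all i hi).1
  have hNullν' : ∀ i, i ≤ n → (ν' i) N = 0 := fun i hi => (hNull_all i hi).2
  have key : ∀ i, i ≤ n →
      (μm ξ).map (fun ω k => ω (k + i)) = (ν i).bind ⇑η :=
    markov_claim P μm hμm η N hNmeas hNsub n ξ hNullν
  have key' : ∀ i, i ≤ n →
      (μm ξ').map (fun ω k => ω (k + i)) = (ν' i).bind ⇑η :=
    markov_claim P μm hμm η N hNmeas hNsub n ξ' hNullν'
  have hhm : Measurable h := hh.1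
  have hpadm : ∀ i : ℕ, Measurable (pad n i xstar : (ℕ → 𝓧) → (Fin n → 𝓧)) := by
    intro i
    apply measurable_pi_lambda
    intro k
    by_cases hk : (k : ℕ) < i
    · simp only [pad, hk, if_true]
      exact measurable_const
    · simp only [pad, hk, if_false]
      exact measurable_pi_apply _
  set H : ℕ → (ℕ → 𝓧) → ℝ := fun i ω => h (pad n i xstar ω) with hHdef
  have hHm : ∀ i, Measurable (H i) := fun i => hhm.comp (hpadm i)
  set C : ℝ := |h (fun _ => xstar)| + ∑ i, c i with hCdef
  have hsumc : ∀ v w : Fin n → 𝓧, |h v - h w| ≤ ∑ i, c i := by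
    intro v w
    refine le_trans (hh.2 v w) (Finset.sum_le_sum fun i _ => ?_)
    split_ifs
    exacts [hc i, le_rfl]
  have hCb : ∀ v, |h v| ≤ C := by
    intro v
    have h1 := hsumc v (fun _ => xstar)
    calc |h v| = |(h v - h (fun _ => xstar)) + h (fun _ => xstar)| := by rw [sub_add_cancel]
      _ ≤ |h v - h (fun _ => xstar)| + |h (fun _ => xstar)| := abs_add_le _ _
      _ ≤ C := by rw [hCdef]; linarith
  have hdiff : ∀ (i : ℕ) (hi : i < n) (ω : ℕ → 𝓧),
      |H i ω - H (i + 1) (shift ω)| ≤ c ⟨i, hi⟩ := by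
    intro i hi ω
    have hb : ∀ j : Fin n,
        (if pad n i xstar ω j = pad n (i + 1) xstar (shift ω) j then 0 else c j)
          ≤ (if j = ⟨i, hi⟩ then c j else 0) := by
      intro j
      by_cases hj : j = ⟨i, hi⟩
      · rw [if_pos hj]
        split_ifs
        · exact hc j
        · exact le_rfl
      · have hji : (j : ℕ) ≠ i := fun hh' => hj (Fin.ext hh')
        have hagree : pad n i xstar ω j = pad n (i + 1) xstar (shift ω) j := by
          rcases lt_or_gt_of_ne hji with hlt | hgt
          · have h1 : (j : ℕ) < i := hlt
            have h2 : (j : ℕ) < i + 1 := by omega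
            simp only [pad, h1, h2, if_true]
          · have h1 : ¬ (j : ℕ) < i := by omega
            have h2 : ¬ (j : ℕ) < i + 1 := by omega
            simp only [pad, h1, h2, if_false]
            show ω ((j : ℕ) - i) = ω ((j : ℕ) - (i + 1) + 1)
            congr 1
            omega
        rw [if_pos hagree, if_neg hj]
    calc |H i ω - H (i + 1) (shift ω)|
        ≤ ∑ j : Fin n, if pad n i xstar ω j = pad n (i + 1) xstar (shift ω) j then 0 else c j :=
          hh.2 _ _
      _ ≤ ∑ j : Fin n, if j = ⟨i, hi⟩ then c j else 0 := Finset.sum_le_sum fun j _ => hb j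
      _ = c ⟨i, hi⟩ := by simp
  set D : ℕ → 𝓧 → ℝ := fun i x => ∫ ω, (H i ω - H (i + 1) (shift ω)) ∂(η x) with hDdef
  have hDm : ∀ i, Measurable (D i) := by
    intro i
    have hsm : StronglyMeasurable
        (Function.uncurry fun (_ : 𝓧) (ω : ℕ → 𝓧) => H i ω - H (i + 1) (shift ω)) :=
      (((hHm i).sub ((hHm (i + 1)).comp measurable_shift)).comp measurable_snd).stronglyMeasurable
    exact (MeasureTheory.StronglyMeasurable.integral_kernel_prod_right (κ := η) hsm).measurable
  have hDb : ∀ (i : ℕ) (hi : i < n) (x : 𝓧), |D i x| ≤ c ⟨i, hi⟩ := by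
    intro i hi x
    have h1 := norm_integral_le_of_norm_le_const (μ := η x)
      (f := fun ω => H i ω - H (i + 1) (shift ω)) (C := c ⟨i, hi⟩)
      (Filter.Eventually.of_forall fun ω => by
        simpa [Real.norm_eq_abs] using hdiff i hi ω)
    simpa [Real.norm_eq_abs, measure_univ] using h1
  set a : ℕ → ℝ := fun i => ∫ ω, H i ω ∂((μm ξ).map (fun ω k => ω (k + i))) with hadef
  set b : ℕ → ℝ := fun i => ∫ ω, H i ω ∂((μm ξ').map (fun ω k => ω (k + i))) with hbdef
  have hQprob : ∀ i : ℕ, IsProbabilityMeasure ((μm ξ).map (fun ω k => ω (k + i))) :=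
    fun i => Measure.isProbabilityMeasure_map (measurable_shifti i).aemeasurable
  have hQ'prob : ∀ i : ℕ, IsProbabilityMeasure ((μm ξ').map (fun ω k => ω (k + i))) :=
    fun i => Measure.isProbabilityMeasure_map (measurable_shifti i).aemeasurable
  have hstep : ∀ (i : ℕ), i < n → a i - a (i + 1) = ∫ x, D i x ∂(ν i) := by
    intro i hi
    haveI := hνprob i
    haveI := hQprob i
    have hint1 : Integrable (H i) ((μm ξ).map (fun ω k => ω (k + i))) :=
      integrable_of_abs_le (hHm i) (fun ω => hCb _)
    have hint2 : Integrable (fun ω => H (i + 1) (shift ω)) ((μm ξ).map (fun ω k => ω (k + i))) :=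
      integrable_of_abs_le ((hHm (i + 1)).comp measurable_shift) (fun ω => hCb _)
    have ha1 : a (i + 1) = ∫ ω, H (i + 1) (shift ω) ∂((μm ξ).map (fun ω k => ω (k + i))) := by
      simp only [hadef]
      rw [map_shift_succ, integral_map measurable_shift.aemeasurable
        (hHm (i + 1)).aestronglyMeasurable]
    have hsub : a i - a (i + 1)
        = ∫ ω, (H i ω - H (i + 1) (shift ω)) ∂((μm ξ).map (fun ω k => ω (k + i))) := by
      rw [ha1]
      simp only [hadef]
      exact (integral_sub hint1 hint2).symm
    rw [hsub, key i (le_of_lt hi)]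
    simp only [hDdef]
    exact integral_bind_markov (ν i) η
      ((hHm i).sub ((hHm (i + 1)).comp measurable_shift)) (hdiff i hi)
  have hstep' : ∀ (i : ℕ), i < n → b i - b (i + 1) = ∫ x, D i x ∂(ν' i) := by
    intro i hi
    haveI := hν'prob i
    haveI := hQ'prob i
    have hint1 : Integrable (H i) ((μm ξ').map (fun ω k => ω (k + i))) :=
      integrable_of_abs_le (hHm i) (fun ω => hCb _)
    have hint2 : Integrable (fun ω => H (i + 1) (shift ω)) ((μm ξ').map (fun ω k => ω (k + i))) :=
      integrable_of_abs_le ((hHm (i + 1)).comp measurable_shift) (fun ω => hCb _)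
    have ha1 : b (i + 1) = ∫ ω, H (i + 1) (shift ω) ∂((μm ξ').map (fun ω k => ω (k + i))) := by
      simp only [hbdef]
      rw [map_shift_succ, integral_map measurable_shift.aemeasurable
        (hHm (i + 1)).aestronglyMeasurable]
    have hsub : b i - b (i + 1)
        = ∫ ω, (H i ω - H (i + 1) (shift ω)) ∂((μm ξ').map (fun ω k => ω (k + i))) := by
      rw [ha1]
      simp only [hbdef]
      exact (integral_sub hint1 hint2).symm
    rw [hsub, key' i (le_of_lt hi)]
    simp only [hDdef]
    exact integral_bind_markov (ν' i) η
      ((hHm i).sub ((hHm (i + 1)).comp measurable_shift)) (hdiff i hi)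
  have hHn : ∀ ω : ℕ → 𝓧, H n ω = h (fun _ => xstar) := by
    intro ω
    simp only [hHdef]
    congr 1
    funext k
    simp [pad, k.isLt]
  have haend : a n = h (fun _ => xstar) := by
    haveI := hQprob n
    simp only [hadef, hHn, integral_const, measureReal_def, measure_univ, ENNReal.toReal_one, smul_eq_mul, one_mul]
  have hbend : b n = h (fun _ => xstar) := by
    haveI := hQ'prob n
    simp only [hbdef, hHn, integral_const, measureReal_def, measure_univ, ENNReal.toReal_one, smul_eq_mul, one_mul]
  have hH0 : ∀ ω : ℕ → 𝓧, H 0 ω = h (fun k : Fin n => ω (k : ℕ)) := by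
    intro ω
    simp only [hHdef]
    congr 1
  have ha0' : a 0 = ∫ ω, h (fun k => ω (k : ℕ)) ∂(μm ξ) := by
    simp only [hadef, hH0]
    rw [show (fun ω : ℕ → 𝓧 => fun k => ω (k + 0)) = id from rfl, Measure.map_id]
  have hb0' : b 0 = ∫ ω, h (fun k => ω (k : ℕ)) ∂(μm ξ') := by
    simp only [hbdef, hH0]
    rw [show (fun ω : ℕ → 𝓧 => fun k => ω (k + 0)) = id from rfl, Measure.map_id]
  have htel : ∀ f : ℕ → ℝ, ∑ i ∈ Finset.range n, (f i - f (i + 1)) = f 0 - f n :=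
    fun f => Finset.sum_range_sub' f n
  have hLHS : (∫ ω, h (fun k => ω (k : ℕ)) ∂(μm ξ)) - ∫ ω, h (fun k => ω (k : ℕ)) ∂(μm ξ')
      = ∑ i ∈ Finset.range n, ((a i - a (i + 1)) - (b i - b (i + 1))) := by
    rw [Finset.sum_sub_distrib, htel a, htel b, haend, hbend, ← ha0', ← hb0']
    ring
  set F : ℕ → ℝ := fun j => if hj : j < n then c ⟨j, hj⟩ * dTV (ν j) (ν' j) else 0 with hFdef
  have hterm : ∀ i ∈ Finset.range n, |(a i - a (i + 1)) - (b i - b (i + 1))| ≤ 2 * F i := by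
    intro i hmem
    have hi : i < n := Finset.mem_range.mp hmem
    haveI := hνprob i
    haveI := hν'prob i
    rw [hstep i hi, hstep' i hi]
    have h1 := abs_integral_sub_le_dTV (μ := ν i) (ν := ν' i) (hDm i) (hDb i hi)
    refine le_trans h1 (le_of_eq ?_)
    simp only [hFdef]
    rw [dif_pos hi]
    ring
  have hRHS : 2 * ∑ i : Fin n, c i * dTV ((μm ξ).map (fun ω => ω (i : ℕ)))
      ((μm ξ').map (fun ω => ω (i : ℕ))) = ∑ i ∈ Finset.range n, 2 * F i := by
    rw [Finset.mul_sum, ← Fin.sum_univ_eq_sum_range (fun j => 2 * F j) n]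
    refine Finset.sum_congr rfl fun i _ => ?_
    simp only [hFdef]
    rw [dif_pos i.isLt]
  rw [hLHS, hRHS]
  calc |∑ i ∈ Finset.range n, ((a i - a (i + 1)) - (b i - b (i + 1)))|
      ≤ ∑ i ∈ Finset.range n, |(a i - a (i + 1)) - (b i - b (i + 1))| :=
        Finset.abs_sum_le_sum_abs _ _
    _ ≤ ∑ i ∈ Finset.range n, 2 * F i := Finset.sum_le_sum hterm


end QMD

end
end

section
/- Let (X,𝒳) be a measurable space, P a Markov kernel on X, n ≥ 1, c ∈ ℝ₊ⁿ, h ∈ BD(Xⁿ, c), and fix x* ∈ X. For 0 ≤ i ≤ n−1 define w̄_i : X → ℝ by w̄_i(x_i) = ∫ [ h(x*,…,x*, x_i, x_{i+1},…,x_{n-1}) − h(x*,…,x*, x_{i+1},…,x_{n-1}) ] Π_{ℓ=i+1}^{n-1} P(x_{ℓ-1}, dx_ℓ) (with i copies of x* in the first term and i+1 copies in the second). Then sup_{x∈X} |w̄_i(x)| ≤ c_i for every 0 ≤ i ≤ n−1, and for every probability measure ξ on X, E_ξ[h(X_0,…,X_{n-1})] = Σ_{i=0}^{n-1} (ξ Pⁱ)(w̄_i)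 + h(x*,…,x*). -/
open MeasureTheory ProbabilityTheory ENNReal Set
open scoped Classical

noncomputable section

namespace QMD

variable {𝓧 : Type*} [MeasurableSpace 𝓧]

lemma bind_congr_ae' {𝓧 Ω : Type*} [MeasurableSpace 𝓧] [MeasurableSpace Ω]
    {μ : Measure 𝓧} {f g : 𝓧 → Measure Ω} (h : f =ᵐ[μ] g) :
    μ.bind f = μ.bind g := by
  unfold Measure.bind
  rw [Measure.map_congr h]

lemma map_bind' {𝓧 Ω Ω' : Type*} [MeasurableSpace 𝓧] [MeasurableSpace Ω] [MeasurableSpace Ω']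
    {μ : Measure 𝓧} {m : 𝓧 → Measure Ω} (hm : Measurable m)
    {g : Ω → Ω'} (hg : Measurable g) :
    (μ.bind m).map g = μ.bind fun x => (m x).map g := by
  conv_lhs => rw [← Measure.bind_dirac_eq_map _ hg]
  rw [Measure.bind_bind (g := fun ω => Measure.dirac (g ω)) hm.aemeasurable (Measure.measurable_dirac.comp hg).aemeasurable]
  simp_rw [Measure.bind_dirac_eq_map _ hg]

lemma integral_bind_of_bounded {𝓧 Ω : Type*} [MeasurableSpace 𝓧] [MeasurableSpace Ω]
    {μ : Measure 𝓧} [IsProbabilityMeasure μ]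
    {m : 𝓧 → Measure Ω} (hm : Measurable m)
    (hp : ∀ᵐ x ∂μ, m x Set.univ = 1)
    {F : Ω → ℝ} (hF : Measurable F) {M : ℝ} (hM : ∀ ω, |F ω| ≤ M) :
    ∫ x, ∫ ω, F ω ∂(m x) ∂μ = ∫ ω, F ω ∂(μ.bind m) := by
  have hM' : ∀ ω, |F ω| ≤ max M 0 := fun ω => (hM ω).trans (le_max_left _ _)
  set C := max M 0 with hC
  have hC0 : (0:ℝ) ≤ C := le_max_right _ _
  have hFp : Measurable fun ω => ENNReal.ofReal (F ω) := hF.ennreal_ofReal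
  have hFn : Measurable fun ω => ENNReal.ofReal (-F ω) := hF.neg.ennreal_ofReal
  have hbu : (μ.bind m) Set.univ = 1 := by
    rw [Measure.bind_apply MeasurableSet.univ hm.aemeasurable, lintegral_congr_ae hp, lintegral_one,
      measure_univ]
  haveI : IsProbabilityMeasure (μ.bind m) := ⟨hbu⟩
  have hintbind : Integrable F (μ.bind m) :=
    ⟨hF.aestronglyMeasurable, HasFiniteIntegral.of_bounded (C := C)
      (ae_of_all _ fun ω => by rw [Real.norm_eq_abs]; exact hM' ω)⟩
  have hlb : ∀ (G : Ω → ℝ), (∀ ω, |G ω| ≤ C) → ∀ x : 𝓧, m x Set.univ = 1 →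
      ∫⁻ ω, ENNReal.ofReal (G ω) ∂(m x) ≤ ENNReal.ofReal C := by
    intro G hGb x hx
    calc ∫⁻ ω, ENNReal.ofReal (G ω) ∂(m x) ≤ ∫⁻ _, ENNReal.ofReal C ∂(m x) :=
          lintegral_mono fun ω => ENNReal.ofReal_le_ofReal ((le_abs_self _).trans (hGb ω))
      _ = ENNReal.ofReal C := by rw [lintegral_const, hx, mul_one]
  have hInt : ∀ x : 𝓧, m x Set.univ = 1 → Integrable F (m x) := by
    intro x hx
    refine ⟨hF.aestronglyMeasurable, ?_⟩
    show (∫⁻ ω, (‖F ω‖₊ : ℝ≥0∞) ∂(m x)) < ⊤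
    calc ∫⁻ ω, (‖F ω‖₊ : ℝ≥0∞) ∂(m x) ≤ ∫⁻ _, ENNReal.ofReal C ∂(m x) :=
          lintegral_mono fun ω => by
            rw [← ENNReal.ofReal_coe_nnreal, coe_nnnorm, Real.norm_eq_abs]
            exact ENNReal.ofReal_le_ofReal (hM' ω)
      _ = ENNReal.ofReal C := by rw [lintegral_const, hx, mul_one]
      _ < ⊤ := ENNReal.ofReal_lt_top
  have hdec : ∀ᵐ x ∂μ, ∫ ω, F ω ∂(m x)
      = (∫⁻ ω, ENNReal.ofReal (F ω) ∂(m x)).toReal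
        - (∫⁻ ω, ENNReal.ofReal (-F ω) ∂(m x)).toReal :=
    hp.mono fun x hx => integral_eq_lintegral_pos_part_sub_lintegral_neg_part (hInt x hx)
  rw [integral_congr_ae hdec]
  have hmeasp : Measurable fun x => ∫⁻ ω, ENNReal.ofReal (F ω) ∂(m x) :=
    (Measure.measurable_lintegral hFp).comp hm
  have hmeasn : Measurable fun x => ∫⁻ ω, ENNReal.ofReal (-F ω) ∂(m x) :=
    (Measure.measurable_lintegral hFn).comp hm
  have hMn : ∀ ω, |(-F ω)| ≤ C := fun ω => by rw [abs_neg]; exact hM' ω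
  have hip : Integrable (fun x => (∫⁻ ω, ENNReal.ofReal (F ω) ∂(m x)).toReal) μ :=
    ⟨hmeasp.ennreal_toReal.aestronglyMeasurable, HasFiniteIntegral.of_bounded (C := C)
      (hp.mono fun x hx => by
        rw [Real.norm_eq_abs, abs_of_nonneg ENNReal.toReal_nonneg]
        exact ENNReal.toReal_le_of_le_ofReal hC0 (hlb F hM' x hx))⟩
  have hin : Integrable (fun x => (∫⁻ ω, ENNReal.ofReal (-F ω) ∂(m x)).toReal) μ :=
    ⟨hmeasn.ennreal_toReal.aestronglyMeasurable, HasFiniteIntegral.of_bounded (C := C)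
      (hp.mono fun x hx => by
        rw [Real.norm_eq_abs, abs_of_nonneg ENNReal.toReal_nonneg]
        exact ENNReal.toReal_le_of_le_ofReal hC0 (hlb _ hMn x hx))⟩
  rw [integral_sub hip hin,
    integral_toReal hmeasp.aemeasurable
      (hp.mono fun x hx => lt_of_le_of_lt (hlb F hM' x hx) ENNReal.ofReal_lt_top),
    integral_toReal hmeasn.aemeasurable
      (hp.mono fun x hx => lt_of_le_of_lt (hlb _ hMn x hx) ENNReal.ofReal_lt_top),
    integral_eq_lintegral_pos_part_sub_lintegral_neg_part hintbind,
    Measure.lintegral_bind hm.aemeasurable hFp.aemeasurable, Measure.lintegral_bind hm.aemeasurable hFn.aemeasurable]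

/-- iterated one-step distributions -/
noncomputable def chain {𝓧 : Type*} [MeasurableSpace 𝓧] (P : Kernel 𝓧 𝓧) :
    ℕ → Measure 𝓧 → Measure 𝓧
  | 0 => id
  | i + 1 => fun ρ => chain P i (ρ.bind (⇑P))

lemma bindP_prob {𝓧 : Type*} [MeasurableSpace 𝓧] (P : Kernel 𝓧 𝓧) [IsMarkovKernel P]
    (ρ : Measure 𝓧) [IsProbabilityMeasure ρ] : IsProbabilityMeasure (ρ.bind ⇑P) := by
  constructor
  rw [Measure.bind_apply MeasurableSet.univ P.measurable.aemeasurable]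
  simp [measure_univ]

lemma chain_prob {𝓧 : Type*} [MeasurableSpace 𝓧] (P : Kernel 𝓧 𝓧) [IsMarkovKernel P]
    (i : ℕ) (ρ : Measure 𝓧) [IsProbabilityMeasure ρ] :
    IsProbabilityMeasure (chain P i ρ) := by
  induction i generalizing ρ with
  | zero => exact ‹_›
  | succ i ih =>
    haveI := bindP_prob P ρ
    exact ih (ρ.bind ⇑P)


/-- The martingale-difference decomposition of `E_ξ[h(X_0,…,X_{n-1})]` :
the functions `w̄_i` are bounded by `c i` and
`E_ξ[h(X_0,…,X_{n-1})] = ∑ i, (ξ Pⁱ)(w̄_i) + h(x*,…,x*)`. -/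
theorem wbar_bound_and_decomposition
    {𝓧 : Type*} [MeasurableSpace 𝓧] (P : Kernel 𝓧 𝓧) [IsMarkovKernel P]
    (μm : Measure 𝓧 → Measure (ℕ → 𝓧)) (hμm : IsMarkovFamily P μm)
    (ξ : Measure 𝓧) [IsProbabilityMeasure ξ]
    (n : ℕ) (hn : 1 ≤ n) (c : Fin n → ℝ) (hc : ∀ i, 0 ≤ c i)
    (h : (Fin n → 𝓧) → ℝ) (hh : h ∈ BD 𝓧 n c) (xstar : 𝓧)
    (w : Fin n → 𝓧 → ℝ)
    (hw : ∀ (i : Fin n) (x : 𝓧),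
      w i x = ∫ ω, (h (pad n i xstar ω) - h (pad n (i + 1) xstar (shift ω)))
        ∂(μm (Measure.dirac x))) :
    (∀ (i : Fin n) (x : 𝓧), |w i x| ≤ c i) ∧
    (∫ ω, h (fun k => ω (k : ℕ)) ∂(μm ξ))
      = (∑ i : Fin n, ∫ x, w i x ∂((μm ξ).map (fun ω => ω (i : ℕ))))
        + h (fun _ => xstar) := by
  obtain ⟨hprob, hbindP⟩ := hμm
  obtain ⟨hmeas_h, hBD⟩ := hh
  set κ : 𝓧 → Measure (ℕ → 𝓧) := fun x => (μm (P x)).map (cons0 x) with hκdef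
  -- basic measurability facts
  have hmeas_shift : Measurable (shift (𝓧 := 𝓧)) :=
    measurable_pi_lambda _ fun k => measurable_pi_apply _
  have hmeasD : ∀ i : ℕ, Measurable (fun ω : ℕ → 𝓧 => fun k => ω (k + i)) := fun i =>
    measurable_pi_lambda _ fun k => measurable_pi_apply _
  have hmeas_cons0 : ∀ x : 𝓧, Measurable (cons0 x : (ℕ → 𝓧) → (ℕ → 𝓧)) := fun x =>
    measurable_pi_lambda _ fun k => by
      cases k with
      | zero => exact measurable_const
      | succ k => exact measurable_pi_apply k
  have hmeas_pad : ∀ i : ℕ, Measurable (pad n i xstar : (ℕ → 𝓧) → Fin n → 𝓧) := by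
    intro i
    apply measurable_pi_lambda
    intro k
    unfold pad
    by_cases hk : (k : ℕ) < i
    · simp only [hk, if_true]; exact measurable_const
    · simp only [hk, if_false]; exact measurable_pi_apply _
  -- basic Markov-family facts
  have hbind : ∀ ρ : Measure 𝓧, IsProbabilityMeasure ρ → μm ρ = ρ.bind κ := hbindP
  have haem : ∀ ρ : Measure 𝓧, IsProbabilityMeasure ρ → AEMeasurable κ ρ := by
    intro ρ hρ
    haveI := hρ
    by_contra hc
    have h0 : μm ρ = 0 := by
      rw [hbind ρ hρ]
      unfold Measure.bind
      rw [Measure.map_of_not_aemeasurable hc, Measure.join_zero]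
    haveI := hprob ρ hρ
    exact (IsProbabilityMeasure.ne_zero (μm ρ)) h0
  have hκdirac : ∀ x : 𝓧, μm (Measure.dirac x) = κ x := by
    intro x
    have hae := haem (Measure.dirac x) inferInstance
    have hmk := hae.ae_eq_mk
    have hx : κ x = hae.mk κ x := by
      obtain ⟨t, hsub, htm, ht0⟩ := exists_measurable_superset_of_null (ae_iff.mp hmk)
      by_contra hne
      have hxt : x ∈ t := hsub hne
      rw [Measure.dirac_apply_of_mem hxt] at ht0
      exact one_ne_zero ht0
    rw [hbind _ inferInstance, bind_congr_ae' hmk, Measure.dirac_bind hae.measurable_mk, ← hx]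
  have hκprob : ∀ x : 𝓧, IsProbabilityMeasure (κ x) := fun x =>
    hκdirac x ▸ hprob _ inferInstance
  -- bound on h
  set M : ℝ := |h (fun _ => xstar)| + ∑ j, c j with hMdef
  have hhM : ∀ z : Fin n → 𝓧, |h z| ≤ M := by
    intro z
    have h1 : |h z| ≤ |h z - h (fun _ => xstar)| + |h (fun _ => xstar)| := by
      calc |h z| = |(h z - h (fun _ => xstar)) + h (fun _ => xstar)| := by ring_nf
        _ ≤ |h z - h (fun _ => xstar)| + |h (fun _ => xstar)| := abs_add_le _ _
    have h2 : |h z - h (fun _ => xstar)| ≤ ∑ j, c j := by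
      refine (hBD z (fun _ => xstar)).trans (Finset.sum_le_sum fun j _ => ?_)
      split
      · exact hc j
      · exact le_rfl
    rw [hMdef]
    linarith
  -- Part 1 : pointwise bound on the difference
  have hdiff_bound : ∀ (i : Fin n) (ω : ℕ → 𝓧),
      |h (pad n (↑i) xstar ω) - h (pad n (↑i + 1) xstar (shift ω))| ≤ c i := by
    intro i ω
    refine (hBD _ _).trans ?_
    calc (∑ j, if pad n (↑i) xstar ω j = pad n (↑i + 1) xstar (shift ω) j then (0:ℝ) else c j)
        ≤ ∑ j, (if j = i then c i else 0) := by
          refine Finset.sum_le_sum fun j _ => ?_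
          by_cases hji : j = i
          · subst hji
            simp only [if_pos rfl]
            split
            · exact hc j
            · exact le_rfl
          · have hvne : (j : ℕ) ≠ (i : ℕ) := fun hv => hji (Fin.ext hv)
            have hpad : pad n (↑i) xstar ω j = pad n (↑i + 1) xstar (shift ω) j := by
              unfold pad shift
              rcases hvne.lt_or_gt with hlt | hgt
              · rw [if_pos hlt, if_pos (by omega)]
              · rw [if_neg (by omega), if_neg (by omega)]
                congr 1
                omega
            simp [hpad, hji]
      _ = c i := by simp
  have part1 : ∀ (i : Fin n) (x : 𝓧), |w i x| ≤ c i := by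
    intro i x
    rw [hw i x]
    haveI := hprob (Measure.dirac x) inferInstance
    have hb := norm_integral_le_of_norm_le_const (μ := μm (Measure.dirac x))
      (f := fun ω => h (pad n (↑i) xstar ω) - h (pad n (↑i + 1) xstar (shift ω))) (C := c i)
      (ae_of_all _ fun ω => by rw [Real.norm_eq_abs]; exact hdiff_bound i ω)
    rw [Real.norm_eq_abs] at hb
    simpa [measure_univ] using hb
  refine ⟨part1, ?_⟩
  -- Part 2
  haveI hμξ : IsProbabilityMeasure (μm ξ) := hprob ξ inferInstance
  -- one-step shift identity
  have hL1 : ∀ ρ : Measure 𝓧, IsProbabilityMeasure ρ →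
      μm (ρ.bind ⇑P) = (μm ρ).map shift := by
    intro ρ hρ
    haveI := hρ
    haveI hbp : IsProbabilityMeasure (ρ.bind ⇑P) := bindP_prob P ρ
    have hae1 := haem _ hbp
    have hae2 := haem _ hρ
    have hL : μm (ρ.bind ⇑P) = ρ.bind fun x => μm (P x) := by
      rw [hbind _ hbp, bind_congr_ae' hae1.ae_eq_mk,
        Measure.bind_bind P.measurable.aemeasurable hae1.measurable_mk.aemeasurable]
      apply bind_congr_ae'
      obtain ⟨t, hsub, htm, ht0⟩ := exists_measurable_superset_of_null (ae_iff.mp hae1.ae_eq_mk)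
      have ht0' : ∫⁻ x, P x t ∂ρ = 0 := by
        rw [← Measure.bind_apply htm P.measurable.aemeasurable]; exact ht0
      have haePt : ∀ᵐ x ∂ρ, P x t = 0 := by
        have := (lintegral_eq_zero_iff (P.measurable_coe htm)).mp ht0'
        filter_upwards [this] with x hx using hx
      filter_upwards [haePt] with x hx
      have hmk : κ =ᵐ[P x] hae1.mk κ := by
        refine ae_iff.mpr (measure_mono_null hsub hx)
      rw [← bind_congr_ae' hmk, ← hbind (P x) inferInstance]
    have hR : (μm ρ).map shift = ρ.bind fun x => μm (P x) := by
      rw [hbind ρ hρ, bind_congr_ae' hae2.ae_eq_mk, map_bind' hae2.measurable_mk hmeas_shift]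
      apply bind_congr_ae'
      filter_upwards [hae2.ae_eq_mk.symm] with x hx
      rw [hx]
      show ((μm (P x)).map (cons0 x)).map shift = μm (P x)
      rw [Measure.map_map hmeas_shift (hmeas_cons0 x)]
      have hid : shift ∘ cons0 x = id := rfl
      rw [hid, Measure.map_id]
    rw [hL, hR]
  -- the law of X_0 is ρ
  have hE0 : ∀ ρ : Measure 𝓧, IsProbabilityMeasure ρ →
      (μm ρ).map (fun ω => ω 0) = ρ := by
    intro ρ hρ
    haveI := hρ
    have hae2 := haem _ hρ
    rw [hbind ρ hρ, bind_congr_ae' hae2.ae_eq_mk,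
      map_bind' hae2.measurable_mk (measurable_pi_apply 0)]
    have hstep : ρ.bind (fun x => (hae2.mk κ x).map (fun ω => ω 0))
        = ρ.bind (fun x => Measure.dirac x) := by
      apply bind_congr_ae'
      filter_upwards [hae2.ae_eq_mk.symm] with x hx
      rw [hx]
      show ((μm (P x)).map (cons0 x)).map (fun ω => ω 0) = Measure.dirac x
      rw [Measure.map_map (measurable_pi_apply 0) (hmeas_cons0 x)]
      have hc0 : ((fun ω : ℕ → 𝓧 => ω 0) ∘ cons0 x) = fun _ => x := rfl
      haveI := hprob (P x) inferInstance
      rw [hc0, Measure.map_const, measure_univ, one_smul]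
    rw [hstep, Measure.bind_dirac]
  -- law of the i-shifted chain
  have hA : ∀ (i : ℕ) (ρ : Measure 𝓧), IsProbabilityMeasure ρ →
      μm (chain P i ρ) = (μm ρ).map (fun ω k => ω (k + i)) := by
    intro i
    induction i with
    | zero =>
      intro ρ hρ
      have hid : (fun (ω : ℕ → 𝓧) (k : ℕ) => ω (k + 0)) = id := rfl
      rw [hid, Measure.map_id]
      rfl
    | succ i ih =>
      intro ρ hρ
      haveI := hρ
      haveI hbp : IsProbabilityMeasure (ρ.bind ⇑P) := bindP_prob P ρ
      show μm (chain P i (ρ.bind ⇑P)) = _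
      rw [ih _ hbp, hL1 ρ hρ, Measure.map_map (hmeasD i) hmeas_shift]
      rfl
  -- law of X_i
  have hB : ∀ (i : ℕ) (ρ : Measure 𝓧), IsProbabilityMeasure ρ →
      (μm ρ).map (fun ω => ω i) = chain P i ρ := by
    intro i
    induction i with
    | zero => exact fun ρ hρ => hE0 ρ hρ
    | succ i ih =>
      intro ρ hρ
      haveI := hρ
      haveI hbp : IsProbabilityMeasure (ρ.bind ⇑P) := bindP_prob P ρ
      have hcomp : (fun ω : ℕ → 𝓧 => ω (i + 1)) = (fun ω => ω i) ∘ shift := rfl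
      rw [hcomp, ← Measure.map_map (measurable_pi_apply i) hmeas_shift, ← hL1 ρ hρ, ih _ hbp]
      rfl
  -- the partial integrals
  set a : ℕ → ℝ := fun j => ∫ ω, h (pad n j xstar (fun k => ω (k + j))) ∂(μm ξ) with hadef
  -- the term-by-term identity
  have hterm : ∀ i : Fin n,
      ∫ x, w i x ∂((μm ξ).map (fun ω => ω (i : ℕ))) = a ↑i - a (↑i + 1) := by
    intro i
    haveI hci : IsProbabilityMeasure (chain P (↑i) ξ) := chain_prob P ↑i ξ
    have hae := haem _ hci
    -- the integrand F
    set F : (ℕ → 𝓧) → ℝ :=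
      fun ω => h (pad n (↑i) xstar ω) - h (pad n (↑i + 1) xstar (shift ω)) with hFdef
    have hFmeas : Measurable F := by
      apply Measurable.sub
      · exact hmeas_h.comp (hmeas_pad ↑i)
      · exact hmeas_h.comp' ((hmeas_pad (↑i + 1)).comp' hmeas_shift)
    have hFbound : ∀ ω, |F ω| ≤ c i := fun ω => hdiff_bound i ω
    have hp1 : ∀ᵐ x ∂(chain P (↑i) ξ), hae.mk κ x Set.univ = 1 := by
      filter_upwards [hae.ae_eq_mk] with x hx
      rw [← hx]
      haveI := hκprob x
      exact measure_univ
    calc ∫ x, w i x ∂((μm ξ).map (fun ω => ω (i : ℕ)))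
        = ∫ x, ∫ ω, F ω ∂(hae.mk κ x) ∂(chain P (↑i) ξ) := by
          rw [hB ↑i ξ inferInstance]
          refine integral_congr_ae ?_
          filter_upwards [hae.ae_eq_mk] with x hx
          rw [hw i x, hκdirac x, hx]
      _ = ∫ ω, F ω ∂((chain P (↑i) ξ).bind (hae.mk κ)) :=
          integral_bind_of_bounded hae.measurable_mk hp1 hFmeas hFbound
      _ = ∫ ω, F ω ∂(μm (chain P (↑i) ξ)) := by
          rw [hbind _ hci, bind_congr_ae' hae.ae_eq_mk]
      _ = ∫ ω, F ω ∂((μm ξ).map (fun ω k => ω (k + ↑i))) := by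
          rw [hA ↑i ξ inferInstance]
      _ = ∫ ω, F (fun k => ω (k + ↑i)) ∂(μm ξ) :=
          integral_map (hmeasD ↑i).aemeasurable hFmeas.aestronglyMeasurable
      _ = a ↑i - a (↑i + 1) := by
          have hshiftD : ∀ ω : ℕ → 𝓧,
              shift (fun k => ω (k + ↑i)) = fun k => ω (k + (↑i + 1)) := by
            intro ω
            funext k
            show ω (k + 1 + ↑i) = ω (k + (↑i + 1))
            congr 1
            omega
          have hFd : ∀ ω : ℕ → 𝓧, F (fun k => ω (k + ↑i))
              = h (pad n (↑i) xstar (fun k => ω (k + ↑i)))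
                - h (pad n (↑i + 1) xstar (fun k => ω (k + (↑i + 1)))) := by
            intro ω
            rw [hFdef]
            simp only
            rw [hshiftD ω]
          rw [integral_congr_ae (ae_of_all _ hFd)]
          have hint1 : Integrable
              (fun ω => h (pad n (↑i) xstar (fun k => ω (k + ↑i)))) (μm ξ) := by
            refine ⟨Measurable.aestronglyMeasurable ?_,
              HasFiniteIntegral.of_bounded (C := M)
                (ae_of_all _ fun ω => by rw [Real.norm_eq_abs]; exact hhM _)⟩
            exact hmeas_h.comp' ((hmeas_pad ↑i).comp' (hmeasD ↑i))
          have hint2 : Integrable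
              (fun ω => h (pad n (↑i + 1) xstar (fun k => ω (k + (↑i + 1))))) (μm ξ) := by
            refine ⟨Measurable.aestronglyMeasurable ?_,
              HasFiniteIntegral.of_bounded (C := M)
                (ae_of_all _ fun ω => by rw [Real.norm_eq_abs]; exact hhM _)⟩
            exact hmeas_h.comp' ((hmeas_pad (↑i + 1)).comp' (hmeasD (↑i + 1)))
          rw [integral_sub hint1 hint2]
  -- telescoping
  have hsum : (∑ i : Fin n, ∫ x, w i x ∂((μm ξ).map (fun ω => ω (i : ℕ))))
      = a 0 - a n := by
    rw [Finset.sum_congr rfl fun i _ => hterm i]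
    rw [Fin.sum_univ_eq_sum_range (fun i => a i - a (i + 1)) n]
    exact Finset.sum_range_sub' a n
  have ha0 : a 0 = ∫ ω, h (fun k => ω (k : ℕ)) ∂(μm ξ) := by
    have hpad0 : ∀ ω : ℕ → 𝓧,
        pad n 0 xstar (fun k => ω (k + 0)) = fun (k : Fin n) => ω (k : ℕ) := by
      intro ω
      funext k
      simp [pad]
    simp only [hadef, hpad0]
  have han : a n = h (fun _ => xstar) := by
    have hpadn : ∀ ω : ℕ → 𝓧, pad n n xstar (fun k => ω (k + n)) = fun _ => xstar := by
      intro ω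
      funext k
      simp [pad, k.isLt]
    simp only [hadef, hpadn]
    rw [integral_const, probReal_univ, one_smul]
  rw [hsum, ← ha0, han]
  ring

end QMD

end
end
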